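/- Any two irreducible polynomials over F_q (coprime to X) with the same order have the same minimal binomial order, namely m/gcd(m, q−1) where m is the common order. -/
import Mathlib


open Polynomial

noncomputable section

/-- A binomial: `X^n - λ` with `n ≥ 1` and `λ ≠ 0`. -/
def IsBinomial {F : Type*} [Field F] (g : F[X]) : Prop :=
  ∃ (n : ℕ) (l : F), 0 < n ∧ l ≠ 0 ∧ g = X ^ n - C l

/-- The order of `f`: the least `m ≥ 1` with `f ∣ X^m − 1`. -/
def polyOrder {F : Type*} [Field F] (f : F[X]) : ℕ :=
  sInf {m | 0 < m ∧ f ∣ X ^ m - 1}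

/-- The minimal binomial order of `f`: the least degree of a binomial divisible by `f`. -/
def minBinOrder {F : Type*} [Field F] (f : F[X]) : ℕ :=
  sInf {n | 0 < n ∧ ∃ l : F, l ≠ 0 ∧ f ∣ X ^ n - C l}

/-- `f` is free of binomials: it divides no binomial of degree less than its order. -/
def FreeOfBinomials {F : Type*} [Field F] (f : F[X]) : Prop :=
  ∀ (k : ℕ) (l : F), 0 < k → k < polyOrder f → l ≠ 0 → ¬ f ∣ X ^ k - C l

/-- `g` is the minimal binomial multiple of `f`: a binomial of least degree divisible by `f`. -/
def IsMinBinMultiple {F : Type*} [Field F] (f g : F[X]) : Prop :=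
  IsBinomial g ∧ f ∣ g ∧
    ∀ h : F[X], IsBinomial h → f ∣ h → g.natDegree ≤ h.natDegree

end

/-- An element of a finite-field extension fixed by `x ↦ x^q` lies in the base field. -/
lemma aux_mem_range {F K : Type*} [Field F] [Fintype F] [Field K] [Fintype K] [Algebra F K]
    {x : K} (h : x ^ Fintype.card F = x) : ∃ l : F, algebraMap F K l = x := by
  classical
  by_contra hc
  push_neg at hc
  set q := Fintype.card F with hqdef
  have hq1 : 1 < q := Fintype.one_lt_card
  set p : K[X] := X ^ q - X with hpdef
  have hp0 : p ≠ 0 := FiniteField.X_pow_card_sub_X_ne_zero K hq1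
  have hdeg : p.natDegree = q := FiniteField.X_pow_card_sub_X_natDegree_eq K hq1
  set s : Finset K := Finset.univ.image (algebraMap F K) with hsdef
  have hcs : s.card = q := by
    rw [hsdef, Finset.card_image_of_injective _ (algebraMap F K).injective,
      Finset.card_univ]
  have hxs : x ∉ s := by
    intro hx
    rw [hsdef, Finset.mem_image] at hx
    obtain ⟨l, _, hl⟩ := hx
    exact hc l hl
  have hroot : ∀ y ∈ insert x s, p.IsRoot y := by
    intro y hy
    rcases Finset.mem_insert.1 hy with rfl | hy
    · simp [hpdef, IsRoot, h]
    · rw [hsdef, Finset.mem_image] at hy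
      obtain ⟨l, _, rfl⟩ := hy
      have : (algebraMap F K l) ^ q = algebraMap F K l := by
        rw [← map_pow, FiniteField.pow_card]
      simp [hpdef, IsRoot, this]
  have hsub : insert x s ⊆ p.roots.toFinset := by
    intro y hy
    exact Multiset.mem_toFinset.2 ((mem_roots hp0).2 (hroot y hy))
  have h1 : (insert x s).card = q + 1 := by rw [Finset.card_insert_of_notMem hxs, hcs]
  have h2 : p.roots.toFinset.card ≤ q := by
    calc p.roots.toFinset.card ≤ Multiset.card p.roots := p.roots.toFinset_card_le
      _ ≤ p.natDegree := p.card_roots'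
      _ = q := hdeg
  have := Finset.card_le_card hsub
  omega

/-- divisibility lemma: `m ∣ n * k ↔ m / gcd m k ∣ n` for `m, k > 0`. -/
lemma aux_dvd_iff {m k n : ℕ} (hm : 0 < m) (hk : 0 < k) :
    m ∣ n * k ↔ m / Nat.gcd m k ∣ n := by
  set d := Nat.gcd m k with hd
  have hd0 : 0 < d := Nat.gcd_pos_of_pos_left k hm
  have hdm : d ∣ m := Nat.gcd_dvd_left m k
  have hdk : d ∣ k := Nat.gcd_dvd_right m k
  constructor
  · intro h
    have h1 : (m / d) * d ∣ (n * (k / d)) * d := by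
      rw [Nat.div_mul_cancel hdm, mul_assoc, Nat.div_mul_cancel hdk]
      exact h
    have h2 : m / d ∣ n * (k / d) :=
      (Nat.mul_dvd_mul_iff_right hd0).1 h1
    have hcop : Nat.Coprime (m / d) (k / d) := Nat.coprime_div_gcd_div_gcd hd0
    exact hcop.dvd_of_dvd_mul_right h2
  · intro h
    have : (m / d) * d ∣ n * k := mul_dvd_mul h hdk
    rwa [Nat.div_mul_cancel hdm] at this

/-- Key lemma: the minimal binomial order of an irreducible `f` with `f(0) ≠ 0` and
order `m` equals `m / gcd(m, q - 1)`. -/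
lemma aux_key {F : Type*} [Field F] [Fintype F] (q : ℕ) (hq : Fintype.card F = q)
    (f : F[X]) (hf : Irreducible f) (hf0 : f.coeff 0 ≠ 0)
    (m : ℕ) (hm : 0 < m) (hof : polyOrder f = m) :
    minBinOrder f = m / Nat.gcd m (q - 1) := by
  classical
  haveI : Fact (Irreducible f) := ⟨hf⟩
  set K := AdjoinRoot f with hK
  haveI : Module.Finite F K := Module.Finite.of_basis (AdjoinRoot.powerBasisAux hf.ne_zero)
  haveI : Finite K := Module.finite_of_finite F
  haveI : Fintype K := Fintype.ofFinite K
  have hcardK : Fintype.card K = Fintype.card K := rfl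
  set α : K := AdjoinRoot.root f with hα
  have hdvd : ∀ h : F[X], f ∣ h ↔ aeval α h = 0 := fun h => by
    rw [AdjoinRoot.aeval_eq, AdjoinRoot.mk_eq_zero]
  have hα0 : α ≠ 0 := by
    intro h0
    have hroot : aeval α f = 0 := (hdvd f).1 dvd_rfl
    rw [h0, aeval_def, eval₂_at_zero] at hroot
    exact hf0 (by simpa using hroot)
  -- translate divisibility conditions
  have hone : ∀ n : ℕ, f ∣ X ^ n - 1 ↔ α ^ n = 1 := fun n => by
    rw [hdvd]; simp [sub_eq_zero]
  have hbin : ∀ (n : ℕ) (l : F), f ∣ X ^ n - C l ↔ α ^ n = algebraMap F K l := fun n l => by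
    rw [hdvd]; simp [sub_eq_zero]
  -- the order of α is m
  have hmem : 0 < m ∧ f ∣ X ^ m - 1 := by
    have hne : {n | 0 < n ∧ f ∣ X ^ n - 1}.Nonempty := by
      by_contra hemp
      rw [Set.not_nonempty_iff_eq_empty] at hemp
      rw [polyOrder, hemp, Nat.sInf_empty] at hof
      omega
    have := Nat.sInf_mem hne
    rwa [← polyOrder, hof] at this
  have hαm : α ^ m = 1 := (hone m).1 hmem.2
  have hfin : IsOfFinOrder α := isOfFinOrder_iff_pow_eq_one.2 ⟨m, hm, hαm⟩
  have hord : orderOf α = m := by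
    have h1 : orderOf α ∣ m := orderOf_dvd_of_pow_eq_one hαm
    have h2 : m ≤ orderOf α := by
      rw [← hof, polyOrder]
      exact Nat.sInf_le ⟨hfin.orderOf_pos, (hone _).2 (pow_orderOf_eq_one α)⟩
    exact Nat.le_antisymm (Nat.le_of_dvd hm h1) h2
  -- q facts
  have hq2 : 2 ≤ q := by rw [← hq]; exact Fintype.one_lt_card
  have hq1pos : 0 < q - 1 := by omega
  set d := Nat.gcd m (q - 1) with hd
  set e := m / d with he
  have hdm : d ∣ m := Nat.gcd_dvd_left _ _
  have hepos : 0 < e := Nat.div_pos (Nat.le_of_dvd hm hdm) (Nat.gcd_pos_of_pos_left _ hm)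
  -- characterize n with a binomial multiple
  have hchar : ∀ n : ℕ, 0 < n → ((∃ l : F, l ≠ 0 ∧ f ∣ X ^ n - C l) ↔ e ∣ n) := by
    intro n hn
    constructor
    · rintro ⟨l, hl0, hl⟩
      have h1 : α ^ n = algebraMap F K l := (hbin n l).1 hl
      have h2 : (α ^ n) ^ (q - 1) = 1 := by
        rw [h1, ← map_pow]
        rw [← hq] at *
        rw [FiniteField.pow_card_sub_one_eq_one l hl0, map_one]
      have h3 : α ^ (n * (q - 1)) = 1 := by rwa [pow_mul]
      have h4 : m ∣ n * (q - 1) := hord ▸ orderOf_dvd_of_pow_eq_one h3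
      exact (aux_dvd_iff hm hq1pos).1 h4
    · intro hdn
      have h4 : m ∣ n * (q - 1) := (aux_dvd_iff hm hq1pos).2 hdn
      have h3 : α ^ (n * (q - 1)) = 1 := by
        rw [← hord] at h4
        exact orderOf_dvd_iff_pow_eq_one.1 h4
      have h5 : (α ^ n) ^ Fintype.card F = α ^ n := by
        have hq' : q - 1 + 1 = q := by omega
        have hnq : n * q = n * (q - 1) + n := by
          calc n * q = n * ((q - 1) + 1) := by rw [hq']
            _ = n * (q - 1) + n := by ring
        rw [hq, ← pow_mul, hnq, pow_add, h3, one_mul]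
      obtain ⟨l, hl⟩ := aux_mem_range h5
      refine ⟨l, ?_, (hbin n l).2 hl.symm⟩
      intro h0
      rw [h0, map_zero] at hl
      exact pow_ne_zero n hα0 hl.symm
  -- conclude
  have hset : {n | 0 < n ∧ ∃ l : F, l ≠ 0 ∧ f ∣ X ^ n - C l} = {n | 0 < n ∧ e ∣ n} := by
    ext n
    simp only [Set.mem_setOf_eq]
    constructor
    · rintro ⟨hn, h⟩; exact ⟨hn, (hchar n hn).1 h⟩
    · rintro ⟨hn, h⟩; exact ⟨hn, (hchar n hn).2 h⟩
  rw [minBinOrder, hset]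
  have hmemE : e ∈ {n | 0 < n ∧ e ∣ n} := ⟨hepos, dvd_rfl⟩
  have hEne : {n | 0 < n ∧ e ∣ n}.Nonempty := ⟨e, hmemE⟩
  have h1 : sInf {n | 0 < n ∧ e ∣ n} ≤ e := Nat.sInf_le hmemE
  have h2 : e ≤ sInf {n | 0 < n ∧ e ∣ n} := by
    obtain ⟨hpos, hdvd'⟩ := Nat.sInf_mem hEne
    exact Nat.le_of_dvd hpos hdvd'
  omega

/-- Two irreducible polynomials over `F_q` (coprime to `X`) with the same order `m`
have the same minimal binomial order, namely `m / gcd(m, q−1)`. -/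
theorem stmt_9 {F : Type*} [Field F] [Fintype F] (q : ℕ) (hq : Fintype.card F = q)
    (f g : F[X]) (hf : Irreducible f) (hg : Irreducible g)
    (hf0 : f.coeff 0 ≠ 0) (hg0 : g.coeff 0 ≠ 0)
    (m : ℕ) (hm : 0 < m) (hof : polyOrder f = m) (hog : polyOrder g = m) :
    minBinOrder f = minBinOrder g ∧ minBinOrder f = m / Nat.gcd m (q - 1) := by
  have h1 := aux_key q hq f hf hf0 m hm hof
  have h2 := aux_key q hq g hg hg0 m hm hog
  exact ⟨h1.trans h2.symm, h1⟩
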